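/- arXiv:1601.03704 — 3 statements merged into one kernel-verified Lean document; each statement's English description precedes it below -/
import Mathlib

section
/- Suppose a symmetric positive semidefinite matrix $A \in \mathbb{R}^{p\times p}$ satisfies the compatibility condition for a set $S \subseteq \{1,\dots,p\}$ of cardinality $s$ with constant $\phi > 0$: for all $\beta$ with $\|\beta_{S^c}\|_1 \le 3\|\beta_S\|_1$, $\|\beta_S\|_1^2 \le (\beta^T A \beta)\, s/\phi^2$. If $\hat{A}$ is another symmetric matrix with $\|\hat{A} - A\|_\infty \le \lambda_1$ (entrywise max norm) and $s\lambda_1 \le \phi^2/32$, then $\hat{A}$ satisfies the compatibility condition for $S$ with constant at least $\phi/\sqrt{2}$: for all $\beta$ with $\|\beta_{S^c}\|_1 \le 3\|\beta_S\|_1$, $\|\beta_S\|_1^2 \le 2(\beta^T \hat{A} \beta)\, s/\phi^2$. -/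
/-! On the cone `‖β_{Sᶜ}‖₁ ≤ 3 ‖β_S‖₁` we have `‖β‖₁ ≤ 4 ‖β_S‖₁`, so an entrywise perturbation of
size `λ₁` moves the quadratic form by at most `λ₁ ‖β‖₁² ≤ 16 λ₁ ‖β_S‖₁²`. The smallness condition
`s λ₁ ≤ φ² / 32` makes this at most half of the lower bound `φ² ‖β_S‖₁² / s` given by the
compatibility of `A`, so `βᵀ Â β` keeps at least half of it. -/

open Matrix Finset

section

variable {ι : Type*} [Fintype ι]

theorem abs_dotProduct_mulVec_le_mul_sq_sum_abs (M : Matrix ι ι ℝ) {lam : ℝ}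
    (hM : ∀ i j, |M i j| ≤ lam) (β : ι → ℝ) :
    |β ⬝ᵥ (M *ᵥ β)| ≤ lam * (∑ i, |β i|) ^ 2 := by
  calc |β ⬝ᵥ (M *ᵥ β)| = |∑ i, ∑ j, β i * M i j * β j| := by
        simp only [dotProduct, mulVec, mul_sum, mul_assoc]
    _ ≤ ∑ i, ∑ j, |β i * M i j * β j| :=
        (abs_sum_le_sum_abs _ _).trans (sum_le_sum fun i _ => abs_sum_le_sum_abs _ _)
    _ ≤ ∑ i, ∑ j, lam * (|β i| * |β j|) := by
        gcongr with i _ j _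
        rw [abs_mul, abs_mul, mul_right_comm, mul_comm]
        exact mul_le_mul_of_nonneg_right (hM i j) (by positivity)
    _ = lam * (∑ i, |β i|) ^ 2 := by
        rw [sq, sum_mul_sum, mul_sum]
        simp only [mul_sum]

variable [DecidableEq ι]

theorem sum_abs_le_of_sum_compl_le (S : Finset ι) {L : ℝ} {β : ι → ℝ}
    (hβ : ∑ j ∈ Sᶜ, |β j| ≤ L * ∑ j ∈ S, |β j|) :
    ∑ j, |β j| ≤ (1 + L) * ∑ j ∈ S, |β j| := by
  rw [← sum_add_sum_compl S]
  linarith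

theorem abs_dotProduct_mulVec_le_of_sum_compl_le (M : Matrix ι ι ℝ) {lam : ℝ}
    (hM : ∀ i j, |M i j| ≤ lam) (S : Finset ι) {L : ℝ} {β : ι → ℝ}
    (hβ : ∑ j ∈ Sᶜ, |β j| ≤ L * ∑ j ∈ S, |β j|) :
    |β ⬝ᵥ (M *ᵥ β)| ≤ lam * ((1 + L) * ∑ j ∈ S, |β j|) ^ 2 := by
  -- `0 ≤ lam` is only forced once `M` has an entry
  rcases isEmpty_or_nonempty ι with hι | ⟨⟨i₀⟩⟩
  · simp [dotProduct, eq_empty_of_isEmpty S]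
  have hlam : 0 ≤ lam := (abs_nonneg _).trans (hM i₀ i₀)
  have hcone := sum_abs_le_of_sum_compl_le S hβ
  have hsum : 0 ≤ ∑ j, |β j| := sum_nonneg fun j _ => abs_nonneg _
  calc |β ⬝ᵥ (M *ᵥ β)| ≤ lam * (∑ j, |β j|) ^ 2 :=
        abs_dotProduct_mulVec_le_mul_sq_sum_abs M hM β
    _ ≤ lam * ((1 + L) * ∑ j ∈ S, |β j|) ^ 2 := by gcongr

end

theorem stmt4_general {p : ℕ} (A Ahat : Matrix (Fin p) (Fin p) ℝ)
    (S : Finset (Fin p)) (φ lam1 : ℝ)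
    (hcompat : ∀ β : Fin p → ℝ,
      (∑ j ∈ Sᶜ, |β j|) ≤ 3 * ∑ j ∈ S, |β j| →
      (∑ j ∈ S, |β j|) ^ 2 ≤ (β ⬝ᵥ (A *ᵥ β)) * (S.card : ℝ) / φ ^ 2)
    (hpert : ∀ i j, |Ahat i j - A i j| ≤ lam1)
    (hsmall : (S.card : ℝ) * lam1 ≤ φ ^ 2 / 32) :
    ∀ β : Fin p → ℝ,
      (∑ j ∈ Sᶜ, |β j|) ≤ 3 * ∑ j ∈ S, |β j| →
      (∑ j ∈ S, |β j|) ^ 2 ≤ 2 * (β ⬝ᵥ (Ahat *ᵥ β)) * (S.card : ℝ) / φ ^ 2 := by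
  intro β hβ
  have hA := hcompat β hβ
  rw [mul_div_assoc] at hA ⊢
  set t := ∑ j ∈ S, |β j|
  set c := (S.card : ℝ) / φ ^ 2
  have hdiff : β ⬝ᵥ (A *ᵥ β) - β ⬝ᵥ (Ahat *ᵥ β) ≤ lam1 * 16 * t ^ 2 := by
    have h := abs_dotProduct_mulVec_le_of_sum_compl_le (Ahat - A) hpert S hβ
    rw [sub_mulVec, dotProduct_sub] at h
    linarith [(abs_le.1 h).1]
  have hc : 0 ≤ c := by positivity
  -- when `φ = 0` this holds because `x / 0 = 0`
  have hlamc : lam1 * c ≤ 1 / 32 := by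
    rw [← mul_div_assoc, mul_comm]
    exact div_le_of_le_mul₀ (sq_nonneg φ) (by norm_num) (by linarith)
  linarith [mul_le_mul_of_nonneg_right hdiff hc, mul_le_mul_of_nonneg_right hlamc (sq_nonneg t)]

/-- Stability of the compatibility condition under entrywise perturbation. -/
theorem stmt4 {p : ℕ} (A Ahat : Matrix (Fin p) (Fin p) ℝ)
    (hA : A.PosSemidef) (hAhat : Ahat.IsSymm)
    (S : Finset (Fin p)) (φ lam1 : ℝ) (hφ : 0 < φ)
    (hcompat : ∀ β : Fin p → ℝ,
      (∑ j ∈ Sᶜ, |β j|) ≤ 3 * ∑ j ∈ S, |β j| →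
      (∑ j ∈ S, |β j|) ^ 2 ≤ (β ⬝ᵥ (A *ᵥ β)) * (S.card : ℝ) / φ ^ 2)
    (hpert : ∀ i j, |Ahat i j - A i j| ≤ lam1)
    (hsmall : (S.card : ℝ) * lam1 ≤ φ ^ 2 / 32) :
    ∀ β : Fin p → ℝ,
      (∑ j ∈ Sᶜ, |β j|) ≤ 3 * ∑ j ∈ S, |β j| →
      (∑ j ∈ S, |β j|) ^ 2 ≤ 2 * (β ⬝ᵥ (Ahat *ᵥ β)) * (S.card : ℝ) / φ ^ 2 :=
  stmt4_general A Ahat S φ lam1 hcompat hpert hsmall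
end

section
/- Under the hypotheses of the previous step (cone inequality $2\|\mathbf{X}(\hat\beta-\beta^*)\|_2^2/n + \tilde\lambda\|\hat\beta_{S_*^c}\|_1 \le 3\tilde\lambda\|\hat\beta_{S_*}-\beta^*_{S_*}\|_1$ holds) and assuming additionally that the Gram matrix $\hat\Sigma = \mathbf{X}^T\mathbf{X}/n$ satisfies the compatibility condition $\|\beta_{S_*}\|_1^2 \le 2(\beta^T\hat\Sigma\beta)s_*/(w\phi_*^2)$ for all $\beta$ in the cone $\|\beta_{S_*^c}\|_1 \le 3\|\beta_{S_*}\|_1$ (where $w > 0$, $s_* = |S_*|$), the following oracle inequality holds: $\|\mathbf{X}(\hat\beta - \beta^*)\|_2^2/n + \tilde\lambda\|\hat\beta - \beta^*\|_1 \le 8\tilde\lambda^2 s_*/(w\phi_*^2)$. -/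
open Matrix Finset

/-! On the cone, compatibility bounds `‖δ_S‖₁` by the prediction error `Q = ‖Xδ‖²/n`, and the
cone inequality gives `Q + λ‖δ‖₁ ≤ 4λ‖δ_S‖₁ - Q`; the inequality `4ab ≤ a² + 4b²` then absorbs the
remaining `Q`. -/

theorem four_mul_le_add_of_sq_le_mul {Q C a lam : ℝ} (hQ : 0 ≤ Q) (hC : 0 ≤ C)
    (ha : a ^ 2 ≤ 2 * Q * C) : 4 * lam * a ≤ Q + 8 * lam ^ 2 * C := by
  have hsq : (4 * lam * a) ^ 2 ≤ (Q + 8 * lam ^ 2 * C) ^ 2 := by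
    nlinarith [mul_le_mul_of_nonneg_left ha (sq_nonneg (4 * lam)), sq_nonneg (Q - 8 * lam ^ 2 * C)]
  exact (abs_le_of_sq_le_sq' hsq (by positivity)).2

theorem add_mul_add_le_of_cone {Q C a b lam : ℝ} (hQ : 0 ≤ Q) (hC : 0 ≤ C)
    (hcone : 2 * Q + lam * b ≤ 3 * lam * a) (hcompat : a ^ 2 ≤ 2 * Q * C) :
    Q + lam * (a + b) ≤ 8 * lam ^ 2 * C := by
  linarith [four_mul_le_add_of_sq_le_mul (lam := lam) hQ hC hcompat]

theorem sum_compl_abs_sub_eq_of_support {p : ℕ} {S : Finset (Fin p)} {β βs : Fin p → ℝ}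
    (hsupp : ∀ j ∉ S, βs j = 0) : ∑ j ∈ Sᶜ, |(β - βs) j| = ∑ j ∈ Sᶜ, |β j| :=
  sum_congr rfl fun j hj => by rw [Pi.sub_apply, hsupp j (mem_compl.mp hj), sub_zero]

theorem stmt6_general {m p : ℕ} (n : ℕ)
    (X : Matrix (Fin m) (Fin p) ℝ) (lam : ℝ) (hlam : 0 < lam)
    (S : Finset (Fin p)) (βs : Fin p → ℝ) (hsupp : ∀ j ∉ S, βs j = 0)
    (βhat : Fin p → ℝ) (φ w : ℝ) (hw : 0 < w)
    (hcone : 2 * (∑ i, ((X *ᵥ (βhat - βs)) i) ^ 2) / (n : ℝ)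
        + lam * ∑ j ∈ Sᶜ, |βhat j|
      ≤ 3 * lam * ∑ j ∈ S, |βhat j - βs j|)
    (hcompat : ∀ β : Fin p → ℝ,
      (∑ j ∈ Sᶜ, |β j|) ≤ 3 * ∑ j ∈ S, |β j| →
      (∑ j ∈ S, |β j|) ^ 2
        ≤ 2 * ((∑ i, ((X *ᵥ β) i) ^ 2) / (n : ℝ)) * (S.card : ℝ) / (w * φ ^ 2)) :
    (∑ i, ((X *ᵥ (βhat - βs)) i) ^ 2) / (n : ℝ) + lam * ∑ j, |βhat j - βs j|
      ≤ 8 * lam ^ 2 * (S.card : ℝ) / (w * φ ^ 2) := by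
  set δ := βhat - βs
  set Q := (∑ i, ((X *ᵥ δ) i) ^ 2) / (n : ℝ)
  have hQ : 0 ≤ Q := by positivity
  have hC : 0 ≤ (S.card : ℝ) / (w * φ ^ 2) := by positivity
  have hcone' : 2 * Q + lam * ∑ j ∈ Sᶜ, |δ j| ≤ 3 * lam * ∑ j ∈ S, |δ j| := by
    rwa [sum_compl_abs_sub_eq_of_support hsupp, ← mul_div_assoc]
  have hδ_cone : ∑ j ∈ Sᶜ, |δ j| ≤ 3 * ∑ j ∈ S, |δ j| := by nlinarith
  have hcompat' := hcompat δ hδ_cone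
  rw [mul_div_assoc] at hcompat'
  rw [← sum_add_sum_compl S, mul_div_assoc]
  exact add_mul_add_le_of_cone hQ hC hcone' hcompat'

/-- Lasso oracle inequality, given the cone inequality and the compatibility
condition for the Gram matrix. -/
theorem stmt6 {m p : ℕ} (n : ℕ) (hn : 0 < n) (Y : Fin m → ℝ)
    (X : Matrix (Fin m) (Fin p) ℝ) (lam : ℝ) (hlam : 0 < lam)
    (S : Finset (Fin p)) (βs : Fin p → ℝ) (hsupp : ∀ j ∉ S, βs j = 0)
    (βhat : Fin p → ℝ) (φ w : ℝ) (hφ : 0 < φ) (hw : 0 < w) (hw1 : w ≤ 1)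
    (hcone : 2 * (∑ i, ((X *ᵥ (βhat - βs)) i) ^ 2) / (n : ℝ)
        + lam * ∑ j ∈ Sᶜ, |βhat j|
      ≤ 3 * lam * ∑ j ∈ S, |βhat j - βs j|)
    (hcompat : ∀ β : Fin p → ℝ,
      (∑ j ∈ Sᶜ, |β j|) ≤ 3 * ∑ j ∈ S, |β j| →
      (∑ j ∈ S, |β j|) ^ 2
        ≤ 2 * ((∑ i, ((X *ᵥ β) i) ^ 2) / (n : ℝ)) * (S.card : ℝ) / (w * φ ^ 2)) :
    (∑ i, ((X *ᵥ (βhat - βs)) i) ^ 2) / (n : ℝ) + lam * ∑ j, |βhat j - βs j|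
      ≤ 8 * lam ^ 2 * (S.card : ℝ) / (w * φ ^ 2) :=
  stmt6_general n X lam hlam S βs hsupp βhat φ w hw hcone hcompat
end

section
/- Suppose Assumptions hold so that for all $j$, $\|\beta^0(j)\|_\infty \le M_*$ and $\|\beta^0(j) - \beta^0(j\pm 1)\|_\infty \le M_*$. Let $(u,v] \subset (\alpha^0_{j-1} - d, \alpha^0_j + d] \cap (0,1]$ with $d = \lambda\sqrt{\delta}/d_* < r(\alpha^0)$, and let $\beta^*_{(u,v]}$ be the convex combination $\sum_r \gamma_{(u,v]}(\alpha^0_r)\beta^0(r)$. Then the bias bound $\|\beta^0(j) - \beta^*_{(u,v]}\|_\infty \le \frac{\max(\alpha^0_{j-1} - u, 0)}{v - u}\|\beta^0(j) - \beta^0(j-1)\|_\infty + \frac{\max(v - \alpha^0_j, 0)}{v-u}\|\beta^0(j+1) - \beta^0(j)\|_\infty$ holds. -/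
/-!
`β*` is an average of the `β⁰(r)` with weights `w r = |(u, v] ∩ (α (r-1), α r]| / (v - u)`,
which sum to one since the segments partition `(0, 1] ⊇ (u, v]`. Hence
`β⁰(j) - β* = ∑ w r (β⁰(j) - β⁰(r))`. As every segment is longer than `d`, the interval
`(u, v]` only meets the segments `j - 1, j, j + 1`, and the two outer weights are at most
`(α (j-1) - u)₊ / (v - u)` and `(v - α j)₊ / (v - u)`.
-/

open Finset

noncomputable def linf {p : ℕ} (x : Fin p → ℝ) : ℝ := ⨆ i, |x i|

lemma linf_eq_norm {p : ℕ} (x : Fin p → ℝ) : linf x = ‖x‖ := by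
  refine le_antisymm (Real.iSup_le (fun i => norm_le_pi_norm x i) (norm_nonneg x)) ?_
  refine (pi_norm_le_iff_of_nonneg (Real.iSup_nonneg fun i => abs_nonneg (x i))).mpr fun i => ?_
  exact le_ciSup (Set.finite_range fun i => |x i|).bddAbove i

lemma norm_sub_sum_smul_le {ι E : Type*} [SeminormedAddCommGroup E] [NormedSpace ℝ E]
    (s : Finset ι) (w : ι → ℝ) (x : E) (y : ι → E) (hw0 : ∀ i ∈ s, 0 ≤ w i)
    (hw1 : ∑ i ∈ s, w i = 1) :
    ‖x - ∑ i ∈ s, w i • y i‖ ≤ ∑ i ∈ s, w i * ‖x - y i‖ := by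
  have hx : x - ∑ i ∈ s, w i • y i = ∑ i ∈ s, w i • (x - y i) := by
    simp only [smul_sub, sum_sub_distrib, ← sum_smul, hw1, one_smul]
  rw [hx]
  refine (norm_sum_le _ _).trans (sum_le_sum fun i hi => ?_)
  rw [norm_smul, Real.norm_of_nonneg (hw0 i hi)]

lemma Finset.sum_le_add_of_eq_zero {ι M : Type*} [AddCommMonoid M] [PartialOrder M]
    [IsOrderedAddMonoid M] {s : Finset ι} {f : ι → M} (hf : ∀ i, 0 ≤ f i) {a b : ι}
    (hab : a ≠ b) (h : ∀ i ∈ s, i ≠ a → i ≠ b → f i = 0) :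
    ∑ i ∈ s, f i ≤ f a + f b := by
  classical
  calc ∑ i ∈ s, f i ≤ ∑ i ∈ insert a (insert b s), f i :=
        sum_le_sum_of_subset_of_nonneg ((subset_insert b s).trans (subset_insert a _))
          fun i _ _ => hf i
    _ = f a + f b := by
        refine sum_eq_add a b hab (fun i hi hne => ?_) (by simp) (by simp)
        simp only [mem_insert, hne.1, hne.2, false_or] at hi
        exact h i hi hne.1 hne.2

/-- Length of `(u, v] ∩ (a, b]`. -/
def overlap (u v a b : ℝ) : ℝ := max 0 (min v b - max u a)

lemma overlap_nonneg (u v a b : ℝ) : 0 ≤ overlap u v a b := le_max_left _ _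

lemma overlap_eq_zero_of_le {u v a b : ℝ} (h : b ≤ u) : overlap u v a b = 0 :=
  max_eq_left (by linarith [min_le_right v b, le_max_left u a])

lemma overlap_eq_zero_of_ge {u v a b : ℝ} (h : v ≤ a) : overlap u v a b = 0 :=
  max_eq_left (by linarith [min_le_left v b, le_max_right u a])

lemma overlap_le_sub_left (u v a b : ℝ) : overlap u v a b ≤ max (b - u) 0 := by
  rw [overlap, max_comm (b - u)]
  exact max_le_max le_rfl (by linarith [min_le_right v b, le_max_left u a])

lemma overlap_le_sub_right (u v a b : ℝ) : overlap u v a b ≤ max (v - a) 0 := by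
  rw [overlap, max_comm (v - a)]
  exact max_le_max le_rfl (by linarith [min_le_left v b, le_max_right u a])

lemma overlap_eq_clamp_sub {u v a b : ℝ} (huv : u ≤ v) (hab : a ≤ b) :
    overlap u v a b = max u (min v b) - max u (min v a) := by
  unfold overlap
  rcases le_total v a with hva | hav
  · rw [min_eq_left (hva.trans hab), min_eq_left hva, max_eq_right huv,
      max_eq_left (by linarith [le_max_right u a])]
    ring
  rcases le_total b u with hbu | hub
  · rw [min_eq_right (hbu.trans huv), min_eq_right (hab.trans (hbu.trans huv)),
      max_eq_left hbu, max_eq_left (hab.trans hbu), max_eq_left (by linarith)]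
    ring
  · rw [min_eq_right hav, max_eq_right (le_min huv hub),
      max_eq_right (by linarith [max_le (le_min huv hub) (le_min hav hab)])]

lemma sum_Icc_sub_pred (G : ℕ → ℝ) (n : ℕ) :
    ∑ r ∈ Icc 1 n, (G r - G (r - 1)) = G n - G 0 := by
  induction n with
  | zero => simp
  | succ n ih => rw [sum_Icc_succ_top (by omega), ih, Nat.add_sub_cancel]; ring

/-- The segments `(α (r-1), α r]`, `1 ≤ r ≤ n`, partition `(α 0, α n] ⊇ (u, v]`. -/
lemma sum_overlap_eq {α : ℕ → ℝ} {n : ℕ} (hα : MonotoneOn α (Set.Iic n)) {u v : ℝ}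
    (hu : α 0 ≤ u) (huv : u ≤ v) (hv : v ≤ α n) :
    ∑ r ∈ Icc 1 n, overlap u v (α (r - 1)) (α r) = v - u := by
  have hclamp : ∀ r ∈ Icc 1 n, overlap u v (α (r - 1)) (α r)
      = max u (min v (α r)) - max u (min v (α (r - 1))) := fun r hr => by
    have hrn : r ≤ n := (mem_Icc.mp hr).2
    exact overlap_eq_clamp_sub huv (hα (Set.mem_Iic.mpr (by omega)) hrn (by omega))
  rw [sum_congr rfl hclamp, sum_Icc_sub_pred (fun r => max u (min v (α r))),
    min_eq_left hv, min_eq_right (hu.trans huv), max_eq_right huv, max_eq_left hu]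

lemma overlap_eq_zero_of_far {α : ℕ → ℝ} {n : ℕ} (hα : MonotoneOn α (Set.Iic n))
    {d u v : ℝ}
    (hlen : ∀ l : ℕ, 1 ≤ l → l ≤ n → d < α l - α (l - 1)) {j : ℕ} (hjn : j ≤ n)
    (hu : α (j - 1) - d ≤ u) (hv : v ≤ α j + d) {r : ℕ} (hr : r ∈ Icc 1 n)
    (hr₁ : r ≠ j - 1) (hr₂ : r ≠ j) (hr₃ : r ≠ j + 1) :
    overlap u v (α (r - 1)) (α r) = 0 := by
  obtain ⟨hr1, hrn⟩ := mem_Icc.mp hr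
  rcases lt_or_gt_of_ne hr₂ with hrj | hjr
  · apply overlap_eq_zero_of_le
    have hsep := hlen (j - 1) (by omega) (by omega)
    have hmono : α r ≤ α (j - 1 - 1) :=
      hα (Set.mem_Iic.mpr hrn) (Set.mem_Iic.mpr (by omega)) (by omega)
    linarith
  · apply overlap_eq_zero_of_ge
    have hsep := hlen (j + 1) (by omega) (by omega)
    have hmono : α (j + 1) ≤ α (r - 1) :=
      hα (Set.mem_Iic.mpr (by omega)) (Set.mem_Iic.mpr (by omega)) (by omega)
    rw [Nat.add_sub_cancel] at hsep
    linarith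

theorem stmt12_general {p : ℕ} (k0 : ℕ) (α : ℕ → ℝ)
    (hα0 : α 0 = 0) (hα1 : α k0 = 1)
    (hmono : ∀ i j : ℕ, i < j → j ≤ k0 → α i < α j)
    (β0 : ℕ → (Fin p → ℝ))
    (d : ℝ)
    (hdr : ∀ l : ℕ, 1 ≤ l → l ≤ k0 → d < α l - α (l - 1))
    (j : ℕ) (hjk : j ≤ k0)
    (u v : ℝ) (hu : 0 ≤ u) (huv : u < v) (hv : v ≤ 1)
    (hul : α (j - 1) - d ≤ u) (hvr : v ≤ α j + d) :
    let βstar : Fin p → ℝ :=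
      ∑ r ∈ Finset.Icc 1 k0,
        ((max 0 (min v (α r) - max u (α (r - 1)))) / (v - u)) • β0 r
    linf (β0 j - βstar)
      ≤ (max (α (j - 1) - u) 0) / (v - u) * linf (β0 j - β0 (j - 1))
        + (max (v - α j) 0) / (v - u) * linf (β0 (j + 1) - β0 j) := by
  intro βstar
  have hα : MonotoneOn α (Set.Iic k0) :=
    StrictMonoOn.monotoneOn fun i _ l hl hil => hmono i l hil hl
  have hvu : 0 < v - u := sub_pos.mpr huv
  set w : ℕ → ℝ := fun r => overlap u v (α (r - 1)) (α r) / (v - u)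
  have hw0 : ∀ r, 0 ≤ w r := fun r => div_nonneg (overlap_nonneg _ _ _ _) hvu.le
  have hw1 : ∑ r ∈ Icc 1 k0, w r = 1 := by
    rw [← sum_div, sum_overlap_eq hα (hα0 ▸ hu) huv.le (hα1 ▸ hv), div_self hvu.ne']
  simp only [linf_eq_norm]
  calc ‖β0 j - βstar‖ ≤ ∑ r ∈ Icc 1 k0, w r * ‖β0 j - β0 r‖ :=
        norm_sub_sum_smul_le _ w _ _ (fun r _ => hw0 r) hw1
    _ ≤ w (j - 1) * ‖β0 j - β0 (j - 1)‖ + w (j + 1) * ‖β0 j - β0 (j + 1)‖ := by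
        refine sum_le_add_of_eq_zero (fun r => mul_nonneg (hw0 r) (norm_nonneg _)) (by omega)
          fun r hr hr₁ hr₃ => ?_
        by_cases hr₂ : r = j
        · simp [hr₂]
        · simp [w, overlap_eq_zero_of_far hα hdr hjk hul hvr hr hr₁ hr₂ hr₃]
    _ ≤ _ := by
        rw [norm_sub_rev (β0 j) (β0 (j + 1))]
        simp only [w]
        gcongr
        · exact overlap_le_sub_left _ _ _ _
        · simpa using overlap_le_sub_right u v (α j) (α (j + 1))

/-- Bias bound for the oracle coefficient on an interval `(u,v]` close to the
`j`-th true segment. -/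
theorem stmt12 {p : ℕ} (k0 : ℕ) (hk0 : 1 ≤ k0) (α : ℕ → ℝ)
    (hα0 : α 0 = 0) (hα1 : α k0 = 1)
    (hmono : ∀ i j : ℕ, i < j → j ≤ k0 → α i < α j)
    (β0 : ℕ → (Fin p → ℝ)) (Mstar : ℝ) (hM : 0 < Mstar)
    (hbdd : ∀ l : ℕ, 1 ≤ l → l ≤ k0 → linf (β0 l) ≤ Mstar)
    (hdiff : ∀ l : ℕ, 1 ≤ l → l < k0 → linf (β0 l - β0 (l + 1)) ≤ Mstar)
    (lam δ dstar d : ℝ) (hlam : 0 < lam) (hδ : 0 < δ) (hdstar : 0 < dstar)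
    (hd : d = lam * Real.sqrt δ / dstar)
    (hdr : ∀ l : ℕ, 1 ≤ l → l ≤ k0 → d < α l - α (l - 1))
    (j : ℕ) (hj1 : 1 ≤ j) (hjk : j ≤ k0)
    (u v : ℝ) (hu : 0 ≤ u) (huv : u < v) (hv : v ≤ 1)
    (hul : α (j - 1) - d ≤ u) (hvr : v ≤ α j + d) :
    let βstar : Fin p → ℝ :=
      ∑ r ∈ Finset.Icc 1 k0,
        ((max 0 (min v (α r) - max u (α (r - 1)))) / (v - u)) • β0 r
    linf (β0 j - βstar)
      ≤ (max (α (j - 1) - u) 0) / (v - u) * linf (β0 j - β0 (j - 1))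
        + (max (v - α j) 0) / (v - u) * linf (β0 (j + 1) - β0 j) :=
  stmt12_general k0 α hα0 hα1 hmono β0 d hdr j hjk u v hu huv hv hul hvr
end
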